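/- Let U be a continuous solution on [−2πδ, 2πδ] of the integral equation U(z) + (iκ²/(2Γ))∫_{−2πδ}^{2πδ} e^{iΓ|z−z₀|}[1 − (ε^{(L)}(z₀) + α|U(z₀)|²)]U(z₀)dz₀ = a·e^{−iΓ(z−2πδ)}, with Γ = κcosφ > 0 and ε^{(L)} continuous. Then U is twice continuously differentiable and satisfies U''(z) + {Γ² − κ²[1 − (ε^{(L)}(z) + α|U(z)|²)]}U(z) = 0 on (−2πδ, 2πδ) together with the boundary conditions iΓU(2πδ) − U'(2πδ) = 2iΓa and iΓU(−2πδ) + U'(−2πδ) = 0. -/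

import Mathlib

/-!
Splitting the kernel at `t = z`, `∫ₐᵇ e^{ik|z-t|} g(t) dt` equals
`W(z) = e^{ikz} ∫ₐᶻ e^{-ikt} g + e^{-ikz} ∫ᶻᵇ e^{ikt} g`, which makes sense for every real `z`.
Differentiating gives `W' = ik (e^{ikz} ∫ₐᶻ … - e^{-ikz} ∫ᶻᵇ …)` (the variable limits cancel) and
`W'' = -k² W + 2ik g` (now they add up). At `z = b` and `z = a`
one of the two integrals vanishes, so `W' = ± ik W` there. The integral equation says
`U = A e^{-ik(z-b)} - c W` on `[a, b]`; with `k = Γ`, `c = iκ²/(2Γ)` and `g` the nonlinear term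
`(1 - (ε + α|U|²)) U`, the source `-2ikc g` becomes `κ² g`, which gives the Sturm–Liouville equation
and the two boundary conditions.
-/

open Set Complex intervalIntegral

theorem contDiff_two_of_hasDerivAt {E : Type*} [NormedAddCommGroup E] [NormedSpace ℝ E]
    {f f' f'' : ℝ → E} (hf : ∀ x, HasDerivAt f (f' x) x) (hf' : ∀ x, HasDerivAt f' (f'' x) x)
    (hf'' : Continuous f'') : ContDiff ℝ 2 f := by
  rw [show (2 : WithTop ℕ∞) = 1 + 1 from rfl, contDiff_succ_iff_deriv,
    funext fun x => (hf x).deriv, contDiff_one_iff_deriv, funext fun x => (hf' x).deriv]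
  exact ⟨fun x => (hf x).differentiableAt, by simp, fun x => (hf' x).differentiableAt, hf''⟩

theorem derivWithin_eqOn_of_eqOn_hasDerivAt {E : Type*} [NormedAddCommGroup E]
    [NormedSpace ℝ E] {f F F' : ℝ → E} {s : Set ℝ} (hs : UniqueDiffOn ℝ s) (hfF : EqOn f F s)
    (hF : ∀ x ∈ s, HasDerivAt F (F' x) x) : EqOn (derivWithin f s) F' s := fun x hx => by
  rw [derivWithin_congr hfF (hfF hx)]
  exact (hF x hx).hasDerivWithinAt.derivWithin (hs x hx)

theorem ContinuousOn.exists_continuous_eqOn_Icc {E : Type*} [TopologicalSpace E] {f : ℝ → E}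
    {a b : ℝ} (hf : ContinuousOn f (Icc a b)) (hab : a ≤ b) :
    ∃ g : ℝ → E, Continuous g ∧ EqOn f g (Icc a b) :=
  ⟨IccExtend hab ((Icc a b).domRestrict f), hf.domRestrict.Icc_extend',
    fun _ ht => (IccExtend_of_mem hab ((Icc a b).domRestrict f) ht).symm⟩

theorem Continuous.integral_hasDerivAt_left {E : Type*} [NormedAddCommGroup E]
    [NormedSpace ℝ E] [CompleteSpace E] {f : ℝ → E} (hf : Continuous f) (b z : ℝ) :
    HasDerivAt (fun z => ∫ t in z..b, f t) (-f z) z :=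
  (integral_hasStrictDerivAt_left (hf.intervalIntegrable _ _)
    (hf.stronglyMeasurableAtFilter _ _) hf.continuousAt).hasDerivAt

theorem hasDerivAt_cexp_mul_ofReal (c : ℂ) (z : ℝ) :
    HasDerivAt (fun t : ℝ => cexp (c * t)) (c * cexp (c * z)) z := by
  simpa [mul_comm] using ((hasDerivAt_id (z : ℂ)).const_mul c).cexp.comp_ofReal

theorem hasDerivAt_cexp_neg_mul_ofReal (c : ℂ) (z : ℝ) :
    HasDerivAt (fun t : ℝ => cexp (-(c * t))) (-c * cexp (-(c * z))) z := by
  simpa only [neg_mul] using hasDerivAt_cexp_mul_ofReal (-c) z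

theorem hasDerivAt_cexp_mul_sub_ofReal (c : ℂ) (b z : ℝ) :
    HasDerivAt (fun t : ℝ => cexp (c * (t - b))) (c * cexp (c * (z - b))) z := by
  simpa [mul_comm] using
    (((hasDerivAt_id (z : ℂ)).sub_const (b : ℂ)).const_mul c).cexp.comp_ofReal

namespace HelmholtzGreen

variable (k : ℂ) (a b : ℝ) (g : ℝ → ℂ)

noncomputable def potential (z : ℝ) : ℂ :=
  cexp (I * k * z) * (∫ t in a..z, cexp (-(I * k * t)) * g t) +
    cexp (-(I * k * z)) * ∫ t in z..b, cexp (I * k * t) * g t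

noncomputable def potentialDeriv (z : ℝ) : ℂ :=
  I * k * (cexp (I * k * z) * (∫ t in a..z, cexp (-(I * k * t)) * g t) -
    cexp (-(I * k * z)) * ∫ t in z..b, cexp (I * k * t) * g t)

variable {k a b g}

theorem integral_cexp_mul_abs_sub_mul_eq_potential
    (hg : IntervalIntegrable g MeasureTheory.volume a b) {z : ℝ} (hz : z ∈ Icc a b) :
    ∫ t in a..b, cexp (I * k * |z - t|) * g t = potential k a b g z := by
  have hint : IntervalIntegrable (fun t => cexp (I * k * |z - t|) * g t)
      MeasureTheory.volume a b :=
    hg.continuousOn_mul (by fun_prop)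
  have hsub : ∀ {c d}, c ∈ Icc a b → d ∈ Icc a b → uIcc c d ⊆ uIcc a b := fun hc hd =>
    uIcc_subset_uIcc (Icc_subset_uIcc hc) (Icc_subset_uIcc hd)
  rw [← integral_add_adjacent_intervals
    (hint.mono_set (hsub (left_mem_Icc.2 (hz.1.trans hz.2)) hz))
    (hint.mono_set (hsub hz (right_mem_Icc.2 (hz.1.trans hz.2)))), potential,
    ← integral_const_mul, ← integral_const_mul]
  congr 1
  · refine integral_congr fun t ht => ?_
    rw [uIcc_of_le hz.1] at ht
    simp only [abs_of_nonneg (sub_nonneg.2 ht.2), ← mul_assoc, ← Complex.exp_add]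
    push_cast
    ring_nf
  · refine integral_congr fun t ht => ?_
    rw [uIcc_of_le hz.2] at ht
    simp only [abs_of_nonpos (sub_nonpos.2 ht.1), ← mul_assoc, ← Complex.exp_add]
    push_cast
    ring_nf

theorem hasDerivAt_potential (hg : Continuous g) (z : ℝ) :
    HasDerivAt (potential k a b g) (potentialDeriv k a b g z) z := by
  have hF := ((by fun_prop : Continuous fun t : ℝ => cexp (-(I * k * t)) * g t)
    |>.integral_hasStrictDerivAt a z).hasDerivAt
  have hG := (by fun_prop : Continuous fun t : ℝ => cexp (I * k * t) * g t)
    |>.integral_hasDerivAt_left b z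
  refine (((hasDerivAt_cexp_mul_ofReal (I * k) z).mul hF).add
    ((hasDerivAt_cexp_neg_mul_ofReal (I * k) z).mul hG)).congr_deriv ?_
  unfold potentialDeriv
  ring

theorem hasDerivAt_potentialDeriv (hg : Continuous g) (z : ℝ) :
    HasDerivAt (potentialDeriv k a b g) (-k ^ 2 * potential k a b g z + 2 * I * k * g z) z := by
  have hF := ((by fun_prop : Continuous fun t : ℝ => cexp (-(I * k * t)) * g t)
    |>.integral_hasStrictDerivAt a z).hasDerivAt
  have hG := (by fun_prop : Continuous fun t : ℝ => cexp (I * k * t) * g t)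
    |>.integral_hasDerivAt_left b z
  have hinv : cexp (I * k * z) * cexp (-(I * k * z)) = 1 := by
    rw [Complex.exp_neg, mul_inv_cancel₀ (Complex.exp_ne_zero _)]
  refine ((((hasDerivAt_cexp_mul_ofReal (I * k) z).mul hF).sub
    ((hasDerivAt_cexp_neg_mul_ofReal (I * k) z).mul hG)).const_mul (I * k)).congr_deriv ?_
  linear_combination (2 * I * k * g z) * hinv +
    k ^ 2 * potential k a b g z * I_sq - k ^ 2 * I ^ 2 * potential.eq_1 k a b g z

theorem contDiff_potential (hg : Continuous g) : ContDiff ℝ 2 (potential k a b g) :=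
  contDiff_two_of_hasDerivAt (hasDerivAt_potential hg) (hasDerivAt_potentialDeriv hg) <|
    (continuous_const.mul (continuous_iff_continuousAt.2 fun z =>
      (hasDerivAt_potential hg z).continuousAt)).add (continuous_const.mul hg)

theorem potentialDeriv_right : potentialDeriv k a b g b = I * k * potential k a b g b := by
  simp [potentialDeriv, potential]

theorem potentialDeriv_left : potentialDeriv k a b g a = -(I * k * potential k a b g a) := by
  simp [potentialDeriv, potential]

variable (k a b g) (c A : ℂ)

noncomputable def totalField (z : ℝ) : ℂ :=
  A * cexp (-I * k * (z - b)) - c * potential k a b g z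

noncomputable def totalFieldDeriv (z : ℝ) : ℂ :=
  -I * k * A * cexp (-I * k * (z - b)) - c * potentialDeriv k a b g z

variable {k a b g c A}

theorem hasDerivAt_totalField (hg : Continuous g) (z : ℝ) :
    HasDerivAt (totalField k a b g c A) (totalFieldDeriv k a b g c A z) z := by
  refine (((hasDerivAt_cexp_mul_sub_ofReal (-I * k) b z).const_mul A).sub
    ((hasDerivAt_potential hg z).const_mul c)).congr_deriv ?_
  rw [totalFieldDeriv]
  ring

theorem hasDerivAt_totalFieldDeriv (hg : Continuous g) (z : ℝ) :
    HasDerivAt (totalFieldDeriv k a b g c A)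
      (-k ^ 2 * totalField k a b g c A z - 2 * I * k * c * g z) z := by
  refine (((hasDerivAt_cexp_mul_sub_ofReal (-I * k) b z).const_mul (-I * k * A)).sub
    ((hasDerivAt_potentialDeriv hg z).const_mul c)).congr_deriv ?_
  rw [totalField]
  linear_combination k ^ 2 * A * cexp (-I * k * (z - b)) * I_sq

theorem contDiff_totalField (hg : Continuous g) : ContDiff ℝ 2 (totalField k a b g c A) :=
  (contDiff_const.mul (contDiff_const.mul (ofRealCLM.contDiff.sub contDiff_const)).cexp).sub
    (contDiff_const.mul (contDiff_potential hg))

theorem totalField_boundary_right :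
    I * k * totalField k a b g c A b - totalFieldDeriv k a b g c A b = 2 * I * k * A := by
  simp only [totalField, totalFieldDeriv, potentialDeriv_right, sub_self, mul_zero,
    Complex.exp_zero]
  ring

theorem totalField_boundary_left :
    I * k * totalField k a b g c A a + totalFieldDeriv k a b g c A a = 0 := by
  simp only [totalField, totalFieldDeriv, potentialDeriv_left]
  ring

theorem eqOn_totalField {U : ℝ → ℂ} (hg : IntervalIntegrable g MeasureTheory.volume a b)
    (hU : ∀ z ∈ Icc a b, U z + c * ∫ t in a..b, cexp (I * k * |z - t|) * g t =
      A * cexp (-I * k * (z - b))) :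
    EqOn U (totalField k a b g c A) (Icc a b) := fun z hz => by
  rw [totalField, ← hU z hz, integral_cexp_mul_abs_sub_mul_eq_potential hg hz]
  ring

end HelmholtzGreen

theorem stmt_19 (δ κ α a φ : ℝ) (hδ : 0 < δ) (hκ : 0 < κ)
    (hφ : |φ| < Real.pi / 2) (Γ : ℝ) (hΓ : Γ = κ * Real.cos φ)
    (εL : ℝ → ℂ)
    (hεL : ContinuousOn εL (Set.Icc (-(2 * Real.pi * δ)) (2 * Real.pi * δ)))
    (U : ℝ → ℂ)
    (hU : ContinuousOn U (Set.Icc (-(2 * Real.pi * δ)) (2 * Real.pi * δ)))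
    (hIE : ∀ z ∈ Set.Icc (-(2 * Real.pi * δ)) (2 * Real.pi * δ),
      U z + (Complex.I * κ ^ 2 / (2 * Γ)) *
          ∫ z₀ in (-(2 * Real.pi * δ))..(2 * Real.pi * δ),
            Complex.exp (Complex.I * Γ * |z - z₀|) *
              (1 - (εL z₀ + ((α * ‖U z₀‖ ^ 2 : ℝ) : ℂ))) * U z₀
        = a * Complex.exp (-Complex.I * Γ * (z - 2 * Real.pi * δ))) :
    ContDiffOn ℝ 2 U (Set.Icc (-(2 * Real.pi * δ)) (2 * Real.pi * δ)) ∧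
    (∀ z ∈ Set.Ioo (-(2 * Real.pi * δ)) (2 * Real.pi * δ),
      derivWithin (derivWithin U (Set.Icc (-(2 * Real.pi * δ)) (2 * Real.pi * δ)))
          (Set.Icc (-(2 * Real.pi * δ)) (2 * Real.pi * δ)) z
        + ((Γ ^ 2 : ℂ) - κ ^ 2 * (1 - (εL z + ((α * ‖U z‖ ^ 2 : ℝ) : ℂ)))) * U z = 0) ∧
    Complex.I * Γ * U (2 * Real.pi * δ)
        - derivWithin U (Set.Icc (-(2 * Real.pi * δ)) (2 * Real.pi * δ)) (2 * Real.pi * δ)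
      = 2 * Complex.I * Γ * a ∧
    Complex.I * Γ * U (-(2 * Real.pi * δ))
        + derivWithin U (Set.Icc (-(2 * Real.pi * δ)) (2 * Real.pi * δ)) (-(2 * Real.pi * δ))
      = 0 := by
  have hΓ0 : (Γ : ℂ) ≠ 0 :=
    ofReal_ne_zero.2 (hΓ ▸ (mul_pos hκ (Real.cos_pos_of_mem_Ioo (abs_lt.1 hφ))).ne')
  have hL : 0 < 2 * Real.pi * δ := by positivity
  simp only [show (2 * Real.pi * δ : ℂ) = ((2 * Real.pi * δ : ℝ) : ℂ) by push_cast; rfl] at hIE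
  generalize 2 * Real.pi * δ = L at *
  set s := Icc (-L) L
  set f : ℝ → ℂ := fun t => (1 - (εL t + ((α * ‖U t‖ ^ 2 : ℝ) : ℂ))) * U t
  have hf : ContinuousOn f s := (continuousOn_const.sub (hεL.add
    (continuous_ofReal.comp_continuousOn (continuousOn_const.mul (hU.norm.pow 2))))).mul hU
  obtain ⟨g, hg, hfg⟩ : ∃ g, Continuous g ∧ EqOn f g s :=
    hf.exists_continuous_eqOn_Icc (neg_le_self hL.le)
  have hIE' : ∀ z ∈ s, U z + I * κ ^ 2 / (2 * Γ) * ∫ t in (-L)..L, cexp (I * Γ * |z - t|) * g t =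
      a * cexp (-I * Γ * (z - L)) := fun z hz => by
    rw [integral_congr fun t ht => by rw [← hfg (by rwa [uIcc_of_le (neg_le_self hL.le)] at ht)]]
    simpa only [f, mul_assoc] using hIE z hz
  have hUV := HelmholtzGreen.eqOn_totalField (hg.intervalIntegrable _ _) hIE'
  have hsd : UniqueDiffOn ℝ s := uniqueDiffOn_Icc (neg_lt_self hL)
  have hU' := derivWithin_eqOn_of_eqOn_hasDerivAt hsd hUV
    fun z _ => HelmholtzGreen.hasDerivAt_totalField hg z
  have hU'' := derivWithin_eqOn_of_eqOn_hasDerivAt hsd hU'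
    fun z _ => HelmholtzGreen.hasDerivAt_totalFieldDeriv hg z
  refine ⟨(HelmholtzGreen.contDiff_totalField hg).contDiffOn.congr hUV, fun z hz => ?_, ?_, ?_⟩
  · have hzs : z ∈ s := Ioo_subset_Icc_self hz
    rw [hU'' hzs]
    beta_reduce
    rw [← hUV hzs, ← hfg hzs]
    field_simp
    linear_combination -(κ ^ 2 * f z) * I_sq
  · have hLs : L ∈ s := right_mem_Icc.2 (neg_le_self hL.le)
    rw [hUV hLs, hU' hLs, HelmholtzGreen.totalField_boundary_right]
  · have hLs : -L ∈ s := left_mem_Icc.2 (neg_le_self hL.le)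
    rw [hUV hLs, hU' hLs, HelmholtzGreen.totalField_boundary_left]
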